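/- In the field ℚ(s,a,b,z₁,z₂) of rational functions, set u = a², v = b², α = (a-b)², β = (a+b)², x(z) = s·(α·z² - β)/(z² - 1), W(z) = (α-β)·z/(α·z² - β), and write xᵢ = x(zᵢ), Wᵢ = W(zᵢ) for i = 1,2. Then [ (1 - s(u+v)/x₁ - s(u+v)/x₂ + s²(u-v)²/(x₁·x₂)) / (2·(x₁-x₂)²·W₁·W₂) + 1/(2·(x₁-x₂)²) ] · x'(z₁)·x'(z₂) = 1/(z₁ - z₂)², where x'(z) denotes the derivative of x(z) with respect to z. -/

import Mathlib

noncomputable section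

/-- The field `ℚ(s,a,b,z₁,z₂)` of rational functions in five indeterminates over `ℚ`. -/
abbrev F5 : Type := FractionRing (MvPolynomial (Fin 5) ℚ)

def fs : F5 := algebraMap (MvPolynomial (Fin 5) ℚ) F5 (MvPolynomial.X 0)
def fa : F5 := algebraMap (MvPolynomial (Fin 5) ℚ) F5 (MvPolynomial.X 1)
def fb : F5 := algebraMap (MvPolynomial (Fin 5) ℚ) F5 (MvPolynomial.X 2)
def fz1 : F5 := algebraMap (MvPolynomial (Fin 5) ℚ) F5 (MvPolynomial.X 3)
def fz2 : F5 := algebraMap (MvPolynomial (Fin 5) ℚ) F5 (MvPolynomial.X 4)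

def fu : F5 := fa ^ 2
def fv : F5 := fb ^ 2
def fα : F5 := (fa - fb) ^ 2
def fβ : F5 := (fa + fb) ^ 2
/-- `x(z) = s(αz²-β)/(z²-1)` as a function of the coordinate. -/
def fx (z : F5) : F5 := fs * (fα * z ^ 2 - fβ) / (z ^ 2 - 1)
/-- `W(z) = (α-β)z/(αz²-β)`, equal to `sqrt(1-2s(u+v)/x+s²(u-v)²/x²)` on the curve. -/
def fW (z : F5) : F5 := (fα - fβ) * z / (fα * z ^ 2 - fβ)


open MvPolynomial in
lemma nzaux (p : MvPolynomial (Fin 5) ℚ)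
    (h : MvPolynomial.eval (![1, 2, 1, 5, 2] : Fin 5 → ℚ) p ≠ 0) :
    algebraMap (MvPolynomial (Fin 5) ℚ) F5 p ≠ 0 := by
  intro h0
  have hp : p = 0 :=
    (map_eq_zero_iff _ (IsFractionRing.injective (MvPolynomial (Fin 5) ℚ) F5)).mp h0
  simp [hp] at h

open MvPolynomial in
lemma hs_ne : fs ≠ 0 := by
  have := nzaux (X 0) (by norm_num); simpa [fs] using this

open MvPolynomial in
lemma hz1_ne : fz1 ≠ 0 := by
  have := nzaux (X 3) (by norm_num [Matrix.cons_val_two, Matrix.cons_val_three, Matrix.cons_val_four]); simpa [fz1] using this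

open MvPolynomial in
lemma hz2_ne : fz2 ≠ 0 := by
  have := nzaux (X 4) (by norm_num [Matrix.cons_val_two, Matrix.cons_val_three, Matrix.cons_val_four]); simpa [fz2] using this

open MvPolynomial in
lemma hz1m_ne : fz1 ^ 2 - 1 ≠ 0 := by
  have := nzaux ((X 3) ^ 2 - 1) (by norm_num [Matrix.cons_val_two, Matrix.cons_val_three, Matrix.cons_val_four]); simpa [fz1] using this

open MvPolynomial in
lemma hz2m_ne : fz2 ^ 2 - 1 ≠ 0 := by
  have := nzaux ((X 4) ^ 2 - 1) (by norm_num [Matrix.cons_val_two, Matrix.cons_val_three, Matrix.cons_val_four]); simpa [fz2] using this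

open MvPolynomial in
lemma hα1_ne : fα * fz1 ^ 2 - fβ ≠ 0 := by
  have := nzaux ((X 1 - X 2) ^ 2 * (X 3) ^ 2 - (X 1 + X 2) ^ 2) (by norm_num [Matrix.cons_val_two, Matrix.cons_val_three, Matrix.cons_val_four])
  simpa [fα, fβ, fa, fb, fz1] using this

open MvPolynomial in
lemma hα2_ne : fα * fz2 ^ 2 - fβ ≠ 0 := by
  have := nzaux ((X 1 - X 2) ^ 2 * (X 4) ^ 2 - (X 1 + X 2) ^ 2) (by norm_num [Matrix.cons_val_two, Matrix.cons_val_three, Matrix.cons_val_four])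
  simpa [fα, fβ, fa, fb, fz2] using this

open MvPolynomial in
lemma hβα_ne : fβ - fα ≠ 0 := by
  have := nzaux ((X 1 + X 2) ^ 2 - (X 1 - X 2) ^ 2) (by norm_num [Matrix.cons_val_two, Matrix.cons_val_three, Matrix.cons_val_four])
  simpa [fα, fβ, fa, fb] using this

open MvPolynomial in
lemma hαβ_ne : fα - fβ ≠ 0 := by
  have := nzaux ((X 1 - X 2) ^ 2 - (X 1 + X 2) ^ 2) (by norm_num [Matrix.cons_val_two, Matrix.cons_val_three, Matrix.cons_val_four])
  simpa [fα, fβ, fa, fb] using this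

open MvPolynomial in
lemma hzz_ne : fz1 - fz2 ≠ 0 := by
  have := nzaux (X 3 - X 4) (by norm_num [Matrix.cons_val_two, Matrix.cons_val_three, Matrix.cons_val_four]); simpa [fz1, fz2] using this

open MvPolynomial in
lemma hzsq_ne : fz1 ^ 2 - fz2 ^ 2 ≠ 0 := by
  have := nzaux ((X 3) ^ 2 - (X 4) ^ 2) (by norm_num [Matrix.cons_val_two, Matrix.cons_val_three, Matrix.cons_val_four]); simpa [fz1, fz2] using this

lemma hDαβ (D : Derivation ℚ F5 F5) (ha : D fa = 0) (hb : D fb = 0) :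
    D fα = 0 ∧ D fβ = 0 := by
  constructor <;> simp [fα, fβ, Derivation.leibniz_pow, map_sub, map_add, ha, hb]

lemma hDx (D : Derivation ℚ F5 F5) (hsq : D fs = 0) (ha : D fa = 0) (hb : D fb = 0)
    (z : F5) (hz : D z = 1) (hzm : z ^ 2 - 1 ≠ 0) :
    D (fx z) = 2 * fs * z * (fβ - fα) / (z ^ 2 - 1) ^ 2 := by
  obtain ⟨hα, hβ⟩ := hDαβ D ha hb
  rw [fx, Derivation.leibniz_div]
  simp [Derivation.leibniz, Derivation.leibniz_pow, hsq, hα, hβ, hz, map_sub, map_one,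
    smul_eq_mul]
  field_simp
  ring

lemma hdiff : fx fz1 - fx fz2
    = fs * (fβ - fα) * (fz1 ^ 2 - fz2 ^ 2) / ((fz1 ^ 2 - 1) * (fz2 ^ 2 - 1)) := by
  rw [fx, fx]
  field_simp [hz1m_ne, hz2m_ne]
  ring

lemma aux1 {K : Type*} [Field K] (s c P q : K) (hs : s ≠ 0) :
    s * c / (s * P / q) = c * q / P := by
  rw [div_div_eq_mul_div, show s * c * q = s * (c * q) from by ring]
  exact mul_div_mul_left (c * q) P hs

lemma aux2 {K : Type*} [Field K] (s c P q R r : K) (hs : s ≠ 0) :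
    s ^ 2 * c / ((s * P / q) * (s * R / r)) = c * (q * r) / (P * R) := by
  rw [div_mul_div_comm, div_div_eq_mul_div,
    show s ^ 2 * c * (q * r) = s ^ 2 * (c * (q * r)) from by ring,
    show s * P * (s * R) = s ^ 2 * (P * R) from by ring]
  exact mul_div_mul_left _ _ (pow_ne_zero 2 hs)

lemma frac4 {K : Type*} [Field K] (c1 n2 d2 n3 d3 n4 d4 N D : K)
    (h2 : d2 ≠ 0) (h3 : d3 ≠ 0) (h4 : d4 ≠ 0) (hD : D ≠ 0)
    (key : (c1 * d2 * d3 * d4 - n2 * d3 * d4 - n3 * d2 * d4 + n4 * d2 * d3) * D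
      = N * (d2 * d3 * d4)) :
    c1 - n2 / d2 - n3 / d3 + n4 / d4 = N / D := by
  field_simp
  linear_combination key

lemma frac_mul {K : Type*} [Field K] (a b c d e f N D : K)
    (hb : b ≠ 0) (hd : d ≠ 0) (hf : f ≠ 0) (hD : D ≠ 0)
    (key : a * c * e * D = N * (b * d * f)) :
    a / b * (c / d) * (e / f) = N / D := by
  rw [div_mul_div_comm, div_mul_div_comm,
    div_eq_div_iff (mul_ne_zero (mul_ne_zero hb hd) hf) hD]
  linear_combination key

set_option maxHeartbeats 1000000 in
lemma key {K : Type*} [Field K] [CharZero K] (s A B z w : K)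
    (htwo : (2 : K) ≠ 0)
    (hs : s ≠ 0) (hz : z ≠ 0) (hw : w ≠ 0)
    (hz1 : z ^ 2 - 1 ≠ 0) (hw1 : w ^ 2 - 1 ≠ 0)
    (hAz : A * z ^ 2 - B ≠ 0) (hAw : A * w ^ 2 - B ≠ 0)
    (hBA : B - A ≠ 0) (hzw : z ^ 2 - w ^ 2 ≠ 0) (hzw2 : z - w ≠ 0) :
    ((1 - s * ((A + B) / 2) / (s * (A * z ^ 2 - B) / (z ^ 2 - 1))
        - s * ((A + B) / 2) / (s * (A * w ^ 2 - B) / (w ^ 2 - 1))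
        + s ^ 2 * (A * B) / ((s * (A * z ^ 2 - B) / (z ^ 2 - 1)) * (s * (A * w ^ 2 - B) / (w ^ 2 - 1))))
      / (2 * (s * (B - A) * (z ^ 2 - w ^ 2) / ((z ^ 2 - 1) * (w ^ 2 - 1))) ^ 2
          * ((A - B) * z / (A * z ^ 2 - B)) * ((A - B) * w / (A * w ^ 2 - B)))
      + 1 / (2 * (s * (B - A) * (z ^ 2 - w ^ 2) / ((z ^ 2 - 1) * (w ^ 2 - 1))) ^ 2))
      * (2 * s * z * (B - A) / (z ^ 2 - 1) ^ 2) * (2 * s * w * (B - A) / (w ^ 2 - 1) ^ 2)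
      = 1 / (z - w) ^ 2 := by
  have hAB : A - B ≠ 0 := fun h => hBA (by linear_combination -h)
  have hPQ : (A * z ^ 2 - B) * (A * w ^ 2 - B) ≠ 0 := mul_ne_zero hAz hAw
  rw [aux1 s ((A + B) / 2) (A * z ^ 2 - B) (z ^ 2 - 1) hs,
    aux1 s ((A + B) / 2) (A * w ^ 2 - B) (w ^ 2 - 1) hs,
    aux2 s (A * B) (A * z ^ 2 - B) (z ^ 2 - 1) (A * w ^ 2 - B) (w ^ 2 - 1) hs]
  rw [frac4 1 ((A + B) / 2 * (z ^ 2 - 1)) (A * z ^ 2 - B)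
      ((A + B) / 2 * (w ^ 2 - 1)) (A * w ^ 2 - B)
      (A * B * ((z ^ 2 - 1) * (w ^ 2 - 1))) ((A * z ^ 2 - B) * (A * w ^ 2 - B))
      ((A - B) ^ 2 * (z ^ 2 + w ^ 2)) (2 * ((A * z ^ 2 - B) * (A * w ^ 2 - B)))
      hAz hAw hPQ (mul_ne_zero htwo hPQ) (by ring)]
  have hWW : (A - B) * z / (A * z ^ 2 - B) * ((A - B) * w / (A * w ^ 2 - B))
      = (A - B) ^ 2 * (z * w) / ((A * z ^ 2 - B) * (A * w ^ 2 - B)) := by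
    rw [div_mul_div_comm]; congr 1; ring
  rw [show 2 * (s * (B - A) * (z ^ 2 - w ^ 2) / ((z ^ 2 - 1) * (w ^ 2 - 1))) ^ 2
          * ((A - B) * z / (A * z ^ 2 - B)) * ((A - B) * w / (A * w ^ 2 - B))
        = ((A - B) * z / (A * z ^ 2 - B) * ((A - B) * w / (A * w ^ 2 - B)))
          * (2 * (s * (B - A) * (z ^ 2 - w ^ 2) / ((z ^ 2 - 1) * (w ^ 2 - 1))) ^ 2) from by ring,
    ← div_div, hWW]
  have hcancel : (A - B) ^ 2 * (z ^ 2 + w ^ 2) / (2 * ((A * z ^ 2 - B) * (A * w ^ 2 - B)))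
        / ((A - B) ^ 2 * (z * w) / ((A * z ^ 2 - B) * (A * w ^ 2 - B)))
      = (z ^ 2 + w ^ 2) / (2 * (z * w)) := by
    rw [div_div_eq_mul_div, div_mul_eq_mul_div,
      show (A - B) ^ 2 * (z ^ 2 + w ^ 2) * ((A * z ^ 2 - B) * (A * w ^ 2 - B))
        = ((A - B) ^ 2 * (z ^ 2 + w ^ 2)) * ((A * z ^ 2 - B) * (A * w ^ 2 - B)) from by ring,
      mul_div_mul_right _ _ hPQ, div_div,
      show 2 * ((A - B) ^ 2 * (z * w)) = (A - B) ^ 2 * (2 * (z * w)) from by ring]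
    exact mul_div_mul_left _ _ (pow_ne_zero 2 hAB)
  rw [hcancel, ← add_div]
  have hX1 : (z ^ 2 + w ^ 2) / (2 * (z * w)) + 1 = (z + w) ^ 2 / (2 * (z * w)) := by
    field_simp
    ring
  rw [hX1, div_div, div_pow (s * (B - A) * (z ^ 2 - w ^ 2)) ((z ^ 2 - 1) * (w ^ 2 - 1)) 2]
  have hb : (2 * (z * w)) * (2 * ((s * (B - A) * (z ^ 2 - w ^ 2)) ^ 2 / ((z ^ 2 - 1) * (w ^ 2 - 1)) ^ 2))
      = (4 * (z * w) * (s * (B - A) * (z ^ 2 - w ^ 2)) ^ 2) / (((z ^ 2 - 1) * (w ^ 2 - 1)) ^ 2) := by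
    ring
  rw [hb, div_div_eq_mul_div]
  have h4zw : 4 * (z * w) * (s * (B - A) * (z ^ 2 - w ^ 2)) ^ 2 ≠ 0 := by
    have h4 : (4 : K) ≠ 0 := by
      intro h; exact htwo (by
        have : (2 : K) * 2 = 0 := by linear_combination h
        rcases mul_eq_zero.mp this with h' | h' <;> exact h')
    exact mul_ne_zero (mul_ne_zero h4 (mul_ne_zero hz hw))
      (pow_ne_zero 2 (mul_ne_zero (mul_ne_zero hs hBA) hzw))
  exact frac_mul _ _ _ _ _ _ 1 ((z - w) ^ 2)
    h4zw (pow_ne_zero 2 hz1) (pow_ne_zero 2 hw1) (pow_ne_zero 2 hzw2)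
    (by ring)

/-- The Bergman-type bidifferential built from the genus-zero two-point function of dessins
equals `dz₁dz₂/(z₁-z₂)²` in the global coordinate `z`. The partial derivatives with respect
to `z₁, z₂` are taken via the (unique) derivations `∂₁, ∂₂` on `ℚ(s,a,b,z₁,z₂)` killing the
other generators with `∂ᵢzᵢ = 1`. -/
theorem dessin_W02_in_global_coordinate
    (D₁ D₂ : Derivation ℚ F5 F5)
    (hD₁s : D₁ fs = 0) (hD₁a : D₁ fa = 0) (hD₁b : D₁ fb = 0)
    (hD₁z1 : D₁ fz1 = 1) (hD₁z2 : D₁ fz2 = 0)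
    (hD₂s : D₂ fs = 0) (hD₂a : D₂ fa = 0) (hD₂b : D₂ fb = 0)
    (hD₂z1 : D₂ fz1 = 0) (hD₂z2 : D₂ fz2 = 1) :
    ((1 - fs * (fu + fv) / fx fz1 - fs * (fu + fv) / fx fz2
          + fs ^ 2 * (fu - fv) ^ 2 / (fx fz1 * fx fz2))
        / (2 * (fx fz1 - fx fz2) ^ 2 * fW fz1 * fW fz2)
      + 1 / (2 * (fx fz1 - fx fz2) ^ 2))
      * D₁ (fx fz1) * D₂ (fx fz2)
      = 1 / (fz1 - fz2) ^ 2 := by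
  have hW1 : fW fz1 ≠ 0 := div_ne_zero (mul_ne_zero hαβ_ne hz1_ne) hα1_ne
  have hW2 : fW fz2 ≠ 0 := div_ne_zero (mul_ne_zero hαβ_ne hz2_ne) hα2_ne
  have hx1 : fx fz1 ≠ 0 := div_ne_zero (mul_ne_zero hs_ne hα1_ne) hz1m_ne
  have hx2 : fx fz2 ≠ 0 := div_ne_zero (mul_ne_zero hs_ne hα2_ne) hz2m_ne
  rw [hDx D₁ hD₁s hD₁a hD₁b fz1 hD₁z1 hz1m_ne, hDx D₂ hD₂s hD₂a hD₂b fz2 hD₂z2 hz2m_ne,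
    hdiff]
  rw [fx, fx, fW, fW]
  have hab : fu + fv = (fα + fβ) / 2 := by
    rw [fu, fv, fα, fβ]; ring
  have hab2 : (fu - fv) ^ 2 = fα * fβ := by
    rw [fu, fv, fα, fβ]; ring
  rw [hab, hab2]
  exact key fs fα fβ fz1 fz2 two_ne_zero hs_ne hz1_ne hz2_ne hz1m_ne hz2m_ne
    hα1_ne hα2_ne hβα_ne hzsq_ne hzz_ne


end
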